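/- Let 0 ≤ m < ∞ and for 0 ≤ n ≤ m let ν̃_n be positive regular Borel measures on [0,∞), each satisfying the Δ₂-condition with constant R_n := sup_{r>0} ν̃_n[0,2r)/ν̃_n[0,r) < ∞. Define w_{(m)}(t) := 2π Σ_{n=0}^m t^{2n} ∫₀^∞ e^{−2rt} dν̃_n(r) for t > 0. Then for all t, x > 0, w_{(m)}(t x) ≥ 2π e^{−t} Σ_{n=0}^m (t x / 2)^{2n} ν̃_n[0, 2/x) / R_n². -/
import Mathlib


open MeasureTheory Set Complex Filter ENNReal

/-- The Laplace transform of `f : (0,∞) → ℂ` at `z`. -/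
noncomputable def laplaceT (f : ℝ → ℂ) (z : ℂ) : ℂ :=
  ∫ t in Set.Ioi (0:ℝ), f t * Complex.exp (-(t : ℂ) * z)

/-- The norm of `f` in the weighted space `L^p_w(0,∞)` (as an extended real). -/
noncomputable def lpwNorm (p : ℝ) (w : ℝ → ℝ) (f : ℝ → ℂ) : ℝ≥0∞ :=
  (∫⁻ t in Set.Ioi (0:ℝ), (‖f t‖₊ : ℝ≥0∞) ^ p * ENNReal.ofReal (w t)) ^ (1/p)

/-- Boundedness of the Laplace–Carleson embedding `𝔏 : L^p_w(0,∞) → L^q(ℂ₊, μ)`. -/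
def lcBounded (p q : ℝ) (w : ℝ → ℝ) (μ : Measure ℂ) : Prop :=
  ∃ C > 0, ∀ f : ℝ → ℂ, Measurable f →
    (∫⁻ z, (‖laplaceT f z‖₊ : ℝ≥0∞) ^ q ∂μ) ^ (1/q) ≤ ENNReal.ofReal C * lpwNorm p w f

/-- The weight `w_{(m)}(t) = 2π Σ_{n=0}^m t^{2n} ∫₀^∞ e^{-2rt} dν̃_n(r)`
(as an extended real). -/
noncomputable def wm (m : ℕ) (ν' : ℕ → Measure ℝ) (t : ℝ) : ℝ≥0∞ :=
  ENNReal.ofReal (2 * Real.pi) *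
    ∑ n ∈ Finset.range (m + 1),
      ENNReal.ofReal (t ^ (2 * n)) * ∫⁻ r, ENNReal.ofReal (Real.exp (-(2 * r * t))) ∂(ν' n)

/-- for measures `ν̃_n` on `[0,∞)` satisfying `Δ₂` with constants
`R_n`, the weight `w_{(m)}` satisfies
`w_{(m)}(tx) ≥ 2π e^{-t} Σ_{n=0}^m (tx/2)^{2n} ν̃_n[0,2/x)/R_n²` for all `t, x > 0`. -/
theorem wm_lower_bound
    (m : ℕ) (ν' : ℕ → Measure ℝ) (hreg : ∀ n ≤ m, (ν' n).Regular)
    (hsupp : ∀ n ≤ m, ν' n {x : ℝ | x < 0} = 0)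
    (R : ℕ → ℝ) (hR0 : ∀ n ≤ m, 0 ≤ R n)
    (hΔ₂ : ∀ n ≤ m, ∀ r > 0,
      ν' n (Set.Ico 0 (2 * r)) ≤ ENNReal.ofReal (R n) * ν' n (Set.Ico 0 r))
    (t x : ℝ) (ht : 0 < t) (hx : 0 < x) :
    ENNReal.ofReal (2 * Real.pi * Real.exp (-t)) *
        ∑ n ∈ Finset.range (m + 1),
          ENNReal.ofReal ((t * x / 2) ^ (2 * n)) *
            (ν' n (Set.Ico 0 (2 / x)) / ENNReal.ofReal ((R n) ^ 2)) ≤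
      wm m ν' (t * x) := by
  have key : ∀ n ∈ Finset.range (m+1),
      ENNReal.ofReal (Real.exp (-t)) *
        (ENNReal.ofReal ((t * x / 2) ^ (2 * n)) *
          (ν' n (Set.Ico 0 (2 / x)) / ENNReal.ofReal ((R n) ^ 2))) ≤
      ENNReal.ofReal ((t * x) ^ (2 * n)) *
        ∫⁻ r, ENNReal.ofReal (Real.exp (-(2 * r * (t * x)))) ∂(ν' n) := by
    intro n hn
    rw [Finset.mem_range_succ_iff] at hn
    have h1 : ν' n (Set.Ico 0 (2 / x)) / ENNReal.ofReal ((R n) ^ 2) ≤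
        ν' n (Set.Ico 0 (1 / (2 * x))) := by
      apply ENNReal.div_le_of_le_mul
      have ha := hΔ₂ n hn (1 / x) (by positivity)
      have hb := hΔ₂ n hn (1 / (2 * x)) (by positivity)
      have e1 : 2 * (1 / x) = 2 / x := by ring
      have e2 : 2 * (1 / (2 * x)) = 1 / x := by field_simp
      rw [e1] at ha; rw [e2] at hb
      calc ν' n (Set.Ico 0 (2 / x))
          ≤ ENNReal.ofReal (R n) * (ENNReal.ofReal (R n) * ν' n (Set.Ico 0 (1 / (2 * x)))) :=
            le_trans ha (mul_le_mul_right hb _)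
        _ = ENNReal.ofReal ((R n) ^ 2) * ν' n (Set.Ico 0 (1 / (2 * x))) := by
            rw [← mul_assoc, ← ENNReal.ofReal_mul (hR0 n hn), sq]
        _ = ν' n (Set.Ico 0 (1 / (2 * x))) * ENNReal.ofReal ((R n) ^ 2) := mul_comm _ _
    have h2 : ENNReal.ofReal (Real.exp (-t)) * ν' n (Set.Ico 0 (1 / (2 * x))) ≤
        ∫⁻ r, ENNReal.ofReal (Real.exp (-(2 * r * (t * x)))) ∂(ν' n) := by
      calc ENNReal.ofReal (Real.exp (-t)) * ν' n (Set.Ico 0 (1 / (2 * x)))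
          = ∫⁻ _ in Set.Ico 0 (1 / (2 * x)), ENNReal.ofReal (Real.exp (-t)) ∂(ν' n) := by
            rw [setLIntegral_const]
        _ ≤ ∫⁻ r in Set.Ico 0 (1 / (2 * x)),
              ENNReal.ofReal (Real.exp (-(2 * r * (t * x)))) ∂(ν' n) := by
            apply setLIntegral_mono' measurableSet_Ico
            intro r hr
            apply ENNReal.ofReal_le_ofReal
            apply Real.exp_le_exp.mpr
            have hrx : r * (2 * x) < 1 := (lt_div_iff₀ (by positivity)).mp hr.2
            nlinarith [mul_lt_mul_of_pos_left hrx ht, hr.1, mul_pos ht hx]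
        _ ≤ ∫⁻ r, ENNReal.ofReal (Real.exp (-(2 * r * (t * x)))) ∂(ν' n) :=
            setLIntegral_le_lintegral _ _
    have h3 : ENNReal.ofReal ((t * x / 2) ^ (2 * n)) ≤ ENNReal.ofReal ((t * x) ^ (2 * n)) := by
      apply ENNReal.ofReal_le_ofReal
      apply pow_le_pow_left₀ (by positivity)
      nlinarith [mul_pos ht hx]
    calc ENNReal.ofReal (Real.exp (-t)) *
          (ENNReal.ofReal ((t * x / 2) ^ (2 * n)) *
            (ν' n (Set.Ico 0 (2 / x)) / ENNReal.ofReal ((R n) ^ 2)))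
        = ENNReal.ofReal ((t * x / 2) ^ (2 * n)) *
            (ENNReal.ofReal (Real.exp (-t)) *
              (ν' n (Set.Ico 0 (2 / x)) / ENNReal.ofReal ((R n) ^ 2))) := by ring
      _ ≤ ENNReal.ofReal ((t * x) ^ (2 * n)) *
            (ENNReal.ofReal (Real.exp (-t)) * ν' n (Set.Ico 0 (1 / (2 * x)))) :=
          mul_le_mul' h3 (mul_le_mul_right h1 _)
      _ ≤ ENNReal.ofReal ((t * x) ^ (2 * n)) *
            ∫⁻ r, ENNReal.ofReal (Real.exp (-(2 * r * (t * x)))) ∂(ν' n) :=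
          mul_le_mul_right h2 _
  rw [wm, ENNReal.ofReal_mul (by positivity), mul_assoc]
  refine mul_le_mul_right ?_ _
  calc ENNReal.ofReal (Real.exp (-t)) *
        ∑ n ∈ Finset.range (m + 1),
          ENNReal.ofReal ((t * x / 2) ^ (2 * n)) *
            (ν' n (Set.Ico 0 (2 / x)) / ENNReal.ofReal ((R n) ^ 2))
      = ∑ n ∈ Finset.range (m + 1),
          ENNReal.ofReal (Real.exp (-t)) *
            (ENNReal.ofReal ((t * x / 2) ^ (2 * n)) *
              (ν' n (Set.Ico 0 (2 / x)) / ENNReal.ofReal ((R n) ^ 2))) := Finset.mul_sum _ _ _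
    _ ≤ ∑ n ∈ Finset.range (m + 1),
          ENNReal.ofReal ((t * x) ^ (2 * n)) *
            ∫⁻ r, ENNReal.ofReal (Real.exp (-(2 * r * (t * x)))) ∂(ν' n) :=
        Finset.sum_le_sum key
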